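/- arXiv:1604.03499 — 3 statements merged into one kernel-verified Lean document; each statement's English description precedes it below -/
import Mathlib

section
/- For all $x, y \in \mathbb{S}^{n-1}$ and $\sigma \ge 0$, $|d(x,y) - d^\sigma(x,y)| \le 1 - \frac{1}{\pi}\arccos\left(\frac{\sigma^2-1}{\sigma^2+1}\right)$, where $d(x,y)=\frac{1}{\pi}\arccos(\langle x,y\rangle)$ and $d^\sigma(x,y)=\frac{1}{\pi}\arccos\left(\frac{\langle x,y\rangle+\sigma^2}{1+\sigma^2}\right)$. -/
/-! Put `t = ⟨x, y⟩`, `s = σ²` and `u = (t + s) / (1 + s) ≥ t`. Since `arccos t - arccos u` and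
`arccos ((1 - s) / (1 + s)) = π - arccos ((s - 1) / (s + 1))` lie in `[0, π]`, it suffices to compare
cosines: from `√(1 - t²) ≤ (1 + s) √(1 - u²)` we get
`cos (arccos t - arccos u) ≥ t u + (1 - t²) / (1 + s) = (1 + t s) / (1 + s) ≥ (1 - s) / (1 + s)`. -/

open Real

namespace Real

lemma cos_arccos_sub_arccos {a b : ℝ} (ha₁ : -1 ≤ a) (ha₂ : a ≤ 1) (hb₁ : -1 ≤ b) (hb₂ : b ≤ 1) :
    cos (arccos a - arccos b) = a * b + √(1 - a ^ 2) * √(1 - b ^ 2) := by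
  rw [cos_sub, cos_arccos ha₁ ha₂, cos_arccos hb₁ hb₂, sin_arccos, sin_arccos]

lemma arccos_sub_arccos_le_arccos {a b c : ℝ} (ha₁ : -1 ≤ a) (ha₂ : a ≤ 1) (hb₁ : -1 ≤ b)
    (hb₂ : b ≤ 1) (h : c ≤ a * b + √(1 - a ^ 2) * √(1 - b ^ 2)) :
    arccos a - arccos b ≤ arccos c := by
  rcases lt_or_ge (arccos a - arccos b) 0 with hneg | hnonneg
  · linarith [arccos_nonneg c]
  · have hle : arccos a - arccos b ≤ π := by linarith [arccos_le_pi a, arccos_nonneg b]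
    calc arccos a - arccos b = arccos (cos (arccos a - arccos b)) := (arccos_cos hnonneg hle).symm
      _ ≤ arccos c := arccos_le_arccos (cos_arccos_sub_arccos ha₁ ha₂ hb₁ hb₂ ▸ h)

end Real

section Distortion

variable {s t : ℝ}

lemma le_add_div_one_add (hs : 0 ≤ s) (ht : t ≤ 1) : t ≤ (t + s) / (1 + s) := by
  rw [le_div_iff₀ (by linarith)]
  nlinarith

lemma add_div_one_add_le_one (hs : 0 ≤ s) (ht : t ≤ 1) : (t + s) / (1 + s) ≤ 1 := by
  rw [div_le_one (by linarith)]
  linarith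

lemma neg_one_le_add_div_one_add (hs : 0 ≤ s) (ht : -1 ≤ t) : -1 ≤ (t + s) / (1 + s) := by
  rw [le_div_iff₀ (by linarith)]
  linarith

lemma sqrt_one_sub_sq_le_mul_sqrt_one_sub_sq (hs : 0 ≤ s) (ht : t ≤ 1) :
    √(1 - t ^ 2) ≤ (1 + s) * √(1 - ((t + s) / (1 + s)) ^ 2) := by
  have h1s : 0 < 1 + s := by linarith
  have key : (1 + s) ^ 2 * (1 - ((t + s) / (1 + s)) ^ 2) = (1 - t) * (1 + t + 2 * s) := by
    field_simp
    ring
  calc √(1 - t ^ 2) ≤ √((1 - t) * (1 + t + 2 * s)) := sqrt_le_sqrt (by nlinarith)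
    _ = (1 + s) * √(1 - ((t + s) / (1 + s)) ^ 2) := by
      rw [← key, sqrt_mul (sq_nonneg _), sqrt_sq h1s.le]

lemma arccos_sub_arccos_add_div_one_add_le (hs : 0 ≤ s) (ht₁ : -1 ≤ t) (ht₂ : t ≤ 1) :
    arccos t - arccos ((t + s) / (1 + s)) ≤ arccos ((1 - s) / (1 + s)) := by
  have h1s : 0 < 1 + s := by linarith
  have hsqrt : (1 - t ^ 2) / (1 + s) ≤ √(1 - t ^ 2) * √(1 - ((t + s) / (1 + s)) ^ 2) := by
    rw [div_le_iff₀ h1s]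
    calc 1 - t ^ 2 = √(1 - t ^ 2) * √(1 - t ^ 2) := (mul_self_sqrt (by nlinarith)).symm
      _ ≤ √(1 - t ^ 2) * ((1 + s) * √(1 - ((t + s) / (1 + s)) ^ 2)) :=
        mul_le_mul_of_nonneg_left (sqrt_one_sub_sq_le_mul_sqrt_one_sub_sq hs ht₂)
          (sqrt_nonneg _)
      _ = _ := by ring
  refine arccos_sub_arccos_le_arccos ht₁ ht₂ (neg_one_le_add_div_one_add hs ht₁)
    (add_div_one_add_le_one hs ht₂) ?_
  calc (1 - s) / (1 + s) ≤ (1 + t * s) / (1 + s) := by gcongr; nlinarith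
    _ = t * ((t + s) / (1 + s)) + (1 - t ^ 2) / (1 + s) := by field_simp; ring
    _ ≤ _ := by linarith

end Distortion

theorem stmt_5_general (n : ℕ) (x y : EuclideanSpace ℝ (Fin n))
    (hx : ‖x‖ = 1) (hy : ‖y‖ = 1) (σ : ℝ) :
    |(1 / Real.pi) * Real.arccos (inner ℝ x y : ℝ) -
        (1 / Real.pi) * Real.arccos (((inner ℝ x y : ℝ) + σ ^ 2) / (1 + σ ^ 2))| ≤
      1 - (1 / Real.pi) * Real.arccos ((σ ^ 2 - 1) / (σ ^ 2 + 1)) := by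
  set t : ℝ := inner ℝ x y
  have hs : 0 ≤ σ ^ 2 := sq_nonneg σ
  obtain ⟨ht₁, ht₂⟩ : -1 ≤ t ∧ t ≤ 1 :=
    abs_le.mp (by simpa [hx, hy] using abs_real_inner_le_norm x y)
  have hmono : arccos ((t + σ ^ 2) / (1 + σ ^ 2)) ≤ arccos t :=
    arccos_le_arccos (le_add_div_one_add hs ht₂)
  have hbound := arccos_sub_arccos_add_div_one_add_le hs ht₁ ht₂
  have hneg : (1 - σ ^ 2) / (1 + σ ^ 2) = -((σ ^ 2 - 1) / (σ ^ 2 + 1)) := by ring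
  rw [hneg, arccos_neg] at hbound
  rw [← mul_sub, abs_mul, abs_of_pos (by positivity), abs_of_nonneg (by linarith)]
  calc 1 / π * (arccos t - arccos ((t + σ ^ 2) / (1 + σ ^ 2)))
      ≤ 1 / π * (π - arccos ((σ ^ 2 - 1) / (σ ^ 2 + 1))) := by gcongr
    _ = 1 - 1 / π * arccos ((σ ^ 2 - 1) / (σ ^ 2 + 1)) := by field_simp

theorem stmt_5 (n : ℕ) (x y : EuclideanSpace ℝ (Fin n))
    (hx : ‖x‖ = 1) (hy : ‖y‖ = 1) (σ : ℝ) (hσ : 0 ≤ σ) :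
    |(1 / Real.pi) * Real.arccos (inner ℝ x y : ℝ) -
        (1 / Real.pi) * Real.arccos (((inner ℝ x y : ℝ) + σ ^ 2) / (1 + σ ^ 2))| ≤
      1 - (1 / Real.pi) * Real.arccos ((σ ^ 2 - 1) / (σ ^ 2 + 1)) :=
  stmt_5_general n x y hx hy σ
end

section
/- Let $H^{n,s}$ denote the class of open hemispheres of $\mathbb{S}^{n-1}$ associated to $s$-sparse unit vectors, i.e., $H^{n,s} = \{\{p \in \mathbb{S}^{n-1} : \langle p,x\rangle > 0\} : x \in \mathbb{S}^{n-1},\ x \text{ has at most } s \text{ nonzero coordinates}\}$. Then $VC(H^{n,s}) \le \frac{2}{\log 2}\, s \log\left(\frac{n e^2}{s \log 2}\right)$; in particular $VC(H^{n,s}) = O(s \log(n/s))$. -/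
/-- A class `C` of subsets of `X` shatters a finite set `B` if every subset of `B`
is the intersection of `B` with a member of `C`. -/
def Shatters {X : Type*} (C : Set (Set X)) (B : Finset X) : Prop :=
  ∀ S : Set X, S ⊆ (B : Set X) → ∃ c ∈ C, (B : Set X) ∩ c = S

/-- The class of open hemispheres of `𝕊^{n-1}` associated to `s`-sparse unit vectors. -/
def sparseHemisphereClass (n s : ℕ) : Set (Set (EuclideanSpace ℝ (Fin n))) :=
  {H | ∃ x : EuclideanSpace ℝ (Fin n), ‖x‖ = 1 ∧ {i | x i ≠ 0}.ncard ≤ s ∧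
    H = {p | ‖p‖ = 1 ∧ 0 < (inner ℝ p x : ℝ)}}

/-! If `B` is shattered by hemispheres of `s`-sparse vectors, every subset of `B` is cut out
by a homogeneous open halfspace of one of the `n.choose s` coordinate spaces `ℝ^T`, `#T = s`.
Homogeneous halfspaces of `ℝ^T` shatter only linearly independent sets, so their VC dimension
is at most `s`, and by Sauer–Shelah they have at most
`∑ k ≤ s, (#B).choose k ≤ (e #B / s)^s` traces on `B`. Hence
`2^#B ≤ (e n / s)^s (e #B / s)^s`; after taking logarithms, bounding `log #B` by a tangent
line (instead of the Lambert-W estimate) solves for `#B`. -/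

section

open Finset Real

theorem sum_choose_le_exp_mul_div_pow {d m : ℕ} (hd : 0 < d) (hdm : d ≤ m) :
    ∑ k ∈ Iic d, (m.choose k : ℝ) ≤ (exp 1 * m / d) ^ d := by
  have hd₀ : (0 : ℝ) < d := by exact_mod_cast hd
  have hm₀ : (0 : ℝ) < m := by exact_mod_cast hd.trans_le hdm
  set t : ℝ := d / m
  have ht₀ : 0 ≤ t := by positivity
  have ht₁ : t ≤ 1 := div_le_one_of_le₀ (by exact_mod_cast hdm) hm₀.le
  -- Chernoff-style: weight the sum by `t ^ k ≥ t ^ d` and complete it to `(1 + t) ^ m ≤ e ^ d`.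
  have key : (∑ k ∈ Iic d, (m.choose k : ℝ)) * t ^ d ≤ exp d :=
    calc (∑ k ∈ Iic d, (m.choose k : ℝ)) * t ^ d
        ≤ ∑ k ∈ Iic d, (m.choose k : ℝ) * t ^ k := by
          rw [sum_mul]
          exact sum_le_sum fun k hk => mul_le_mul_of_nonneg_left
            (pow_le_pow_of_le_one ht₀ ht₁ (mem_Iic.1 hk)) (by positivity)
      _ ≤ ∑ k ∈ range (m + 1), (m.choose k : ℝ) * t ^ k := by
          refine sum_le_sum_of_subset_of_nonneg (fun k hk => ?_) (fun _ _ _ => by positivity)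
          exact mem_range.2 (Nat.lt_succ_of_le ((mem_Iic.1 hk).trans hdm))
      _ = (t + 1) ^ m := by rw [add_pow]; simp_rw [one_pow, mul_one, mul_comm]
      _ ≤ exp t ^ m := by gcongr; linarith [add_one_le_exp t]
      _ = exp d := by rw [← exp_nat_mul]; congr 1; simp only [t]; field_simp
  calc ∑ k ∈ Iic d, (m.choose k : ℝ) ≤ exp d / t ^ d := by
        rwa [le_div_iff₀ (by positivity)]
    _ = (exp 1 * m / d) ^ d := by
        rw [← exp_one_pow, div_pow, div_pow, mul_pow]; field_simp

theorem choose_le_exp_mul_div_pow {d m : ℕ} (hd : 0 < d) (hdm : d ≤ m) :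
    (m.choose d : ℝ) ≤ (exp 1 * m / d) ^ d :=
  (single_le_sum (f := fun k => (m.choose k : ℝ)) (fun _ _ => by positivity)
    (mem_Iic.2 le_rfl)).trans (sum_choose_le_exp_mul_div_pow hd hdm)

section Halfspaces

variable {α ι : Type*} [Fintype α] [Fintype ι]

open scoped Classical in
noncomputable def halfspaceTraces (φ : α → ι → ℝ) : Finset (Finset α) :=
  {t | ∃ y : ι → ℝ, ∀ a, a ∈ t ↔ 0 < φ a ⬝ᵥ y}

theorem mem_halfspaceTraces {φ : α → ι → ℝ} {t : Finset α} :
    t ∈ halfspaceTraces φ ↔ ∃ y : ι → ℝ, ∀ a, a ∈ t ↔ 0 < φ a ⬝ᵥ y := by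
  simp [halfspaceTraces]

variable [DecidableEq α]

theorem nonpos_of_shatters_halfspaceTraces {φ : α → ι → ℝ} {u : Finset α}
    (hu : (halfspaceTraces φ).Shatters u) {g : α → ℝ} (hg : ∑ a ∈ u, g a • φ a = 0)
    {a : α} (ha : a ∈ u) : g a ≤ 0 := by
  by_contra! hga
  -- A halfspace cutting out exactly the positive coefficients makes every term of
  -- `∑ g b * (φ b ⬝ᵥ y) = 0` nonnegative and the `a`-th one positive.
  obtain ⟨t, ht, hut⟩ := hu (filter_subset (fun b => 0 < g b) u)
  obtain ⟨y, hy⟩ := mem_halfspaceTraces.1 ht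
  have hsign : ∀ b ∈ u, 0 < g b ↔ 0 < φ b ⬝ᵥ y := fun b hb => by
    simpa [hb, hy] using (Finset.ext_iff.1 hut b).symm
  have hterm : ∀ b ∈ u, 0 ≤ g b * (φ b ⬝ᵥ y) := by
    intro b hb
    by_cases hgb : 0 < g b
    · exact (mul_pos hgb ((hsign b hb).1 hgb)).le
    · exact mul_nonneg_of_nonpos_of_nonpos (not_lt.1 hgb) (not_lt.1 ((hsign b hb).not.1 hgb))
  have hpos : 0 < ∑ b ∈ u, g b * (φ b ⬝ᵥ y) :=
    sum_pos' hterm ⟨a, ha, mul_pos hga ((hsign a ha).1 hga)⟩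
  have hzero : ∑ b ∈ u, g b * (φ b ⬝ᵥ y) = 0 := by
    simp_rw [← smul_eq_mul, ← smul_dotProduct, ← sum_dotProduct, hg, zero_dotProduct]
  exact hpos.ne' hzero

theorem linearIndepOn_of_shatters_halfspaceTraces {φ : α → ι → ℝ} {u : Finset α}
    (hu : (halfspaceTraces φ).Shatters u) : LinearIndepOn ℝ φ (u : Set α) := by
  refine linearIndepOn_finset_iff.2 fun g hg a ha => le_antisymm
    (nonpos_of_shatters_halfspaceTraces hu hg ha) ?_
  have hg' : ∑ b ∈ u, (-g) b • φ b = 0 := by simp [neg_smul, hg]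
  simpa using nonpos_of_shatters_halfspaceTraces hu hg' ha

theorem vcDim_halfspaceTraces_le (φ : α → ι → ℝ) :
    (halfspaceTraces φ).vcDim ≤ Fintype.card ι := by
  refine Finset.sup_le fun u hu => ?_
  simpa using (linearIndepOn_of_shatters_halfspaceTraces
    (mem_shatterer.1 hu)).fintype_card_le_finrank

theorem card_halfspaceTraces_le (φ : α → ι → ℝ) :
    #(halfspaceTraces φ) ≤ ∑ k ∈ Iic (Fintype.card ι), (Fintype.card α).choose k :=
  (card_le_card_shatterer _).trans <| card_shatterer_le_sum_vcDim.trans <|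
    sum_le_sum_of_subset (Iic_subset_Iic.2 (vcDim_halfspaceTraces_le φ))

end Halfspaces

theorem le_of_mul_log_two_le_add_mul_log {s m c : ℝ} (hs : 0 < s) (hm : 0 < m) (hc : 0 < c)
    (h : m * log 2 ≤ s * log c + s * log (exp 1 * m / s)) :
    m ≤ 2 / log 2 * s * log (2 * c / log 2) := by
  have hl2 : 0 < log 2 := log_pos one_lt_two
  -- `log y ≤ y - 1` at `y = (log 2 / 2) * (m / s)` makes the right-hand side linear in `m`.
  have htangent : log (log 2 / 2 * (m / s)) ≤ log 2 / 2 * (m / s) - 1 :=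
    log_le_sub_one_of_pos (by positivity)
  have hsplit : log (exp 1 * m / s) = 1 + log (m / s) := by
    rw [mul_div_assoc, log_mul (exp_pos 1).ne' (by positivity), log_exp]
  rw [log_mul (by positivity) (by positivity)] at htangent
  have hlin : s * log (exp 1 * m / s) ≤ log 2 / 2 * m - s * log (log 2 / 2) := by
    have : s * (log 2 / 2 * (m / s)) = log 2 / 2 * m := by field_simp
    nlinarith
  have hlog : log (2 * c / log 2) = log c - log (log 2 / 2) := by
    rw [← log_div hc.ne' (by positivity)]; congr 1; field_simp
  rw [hlog, div_mul_eq_mul_div, div_mul_eq_mul_div, le_div_iff₀ hl2]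
  nlinarith

theorem le_of_two_pow_le_choose_mul_sum_choose {n s m : ℕ} (hsn : s ≤ n)
    (h : 2 ^ m ≤ n.choose s * ∑ k ∈ Iic s, m.choose k) :
    (m : ℝ) ≤ 2 / log 2 * s * log (n * exp 1 ^ 2 / (s * log 2)) := by
  rcases s.eq_zero_or_pos with rfl | hs
  · rw [← bot_eq_zero, Iic_bot] at h
    simp_all [← not_lt, Nat.one_lt_two_pow_iff]
  have hs₀ : (0 : ℝ) < s := by exact_mod_cast hs
  have hsn' : (s : ℝ) ≤ n := by exact_mod_cast hsn
  have hn₀ : (0 : ℝ) < n := hs₀.trans_le hsn'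
  have hl2 : 0 < log 2 := log_pos one_lt_two
  have hl2' : log 2 < 1 := by linarith [log_two_lt_d9]
  have he : 2 ≤ exp 1 := by linarith [add_one_le_exp (1 : ℝ)]
  set L := log (n * exp 1 ^ 2 / (s * log 2))
  have hL : 1 ≤ L := by
    rw [le_log_iff_exp_le (by positivity), le_div_iff₀ (by positivity)]
    calc exp 1 * (s * log 2) ≤ exp 1 * n := by gcongr; nlinarith
      _ ≤ n * exp 1 ^ 2 := by
          nlinarith [mul_le_mul_of_nonneg_left (by linarith : 1 ≤ exp 1)
            (mul_pos (exp_pos 1) hn₀).le]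
  rcases le_or_gt m s with hms | hms
  · have : (1 : ℝ) ≤ 2 / log 2 := by rw [le_div_iff₀ hl2]; linarith
    calc (m : ℝ) ≤ 1 * s * 1 := by simpa using (Nat.cast_le (α := ℝ)).2 hms
      _ ≤ 2 / log 2 * s * L := by gcongr
  have hm₀ : (0 : ℝ) < m := hs₀.trans (by exact_mod_cast hms)
  have hpow : (2 : ℝ) ^ m ≤ (exp 1 * n / s) ^ s * (exp 1 * m / s) ^ s := by
    calc (2 : ℝ) ^ m ≤ n.choose s * ∑ k ∈ Iic s, (m.choose k : ℝ) := by exact_mod_cast h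
      _ ≤ _ := by
        gcongr
        · exact choose_le_exp_mul_div_pow hs hsn
        · exact sum_choose_le_exp_mul_div_pow hs hms.le
  have hlog : m * log 2 ≤ s * log (exp 1 * n / s) + s * log (exp 1 * m / s) := by
    have := log_le_log (by positivity) hpow
    rwa [log_mul (by positivity) (by positivity), log_pow, log_pow, log_pow] at this
  calc (m : ℝ) ≤ 2 / log 2 * s * log (2 * (exp 1 * n / s) / log 2) :=
        le_of_mul_log_two_le_add_mul_log hs₀ hm₀ (by positivity) hlog
    _ ≤ 2 / log 2 * s * L := by
        gcongr 2 / log 2 * s * ?_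
        refine log_le_log (by positivity) ?_
        rw [mul_div_assoc', div_div, div_le_div_iff_of_pos_right (by positivity)]
        nlinarith [mul_le_mul_of_nonneg_left he (mul_pos (exp_pos 1) hn₀).le]

section SparseHemispheres

variable {n s : ℕ}

theorem inner_eq_dotProduct_restrict {T : Finset (Fin n)} {x : EuclideanSpace ℝ (Fin n)}
    (hx : ∀ i, x i ≠ 0 → i ∈ T) (p : EuclideanSpace ℝ (Fin n)) :
    inner ℝ p x = (fun i : T => p i) ⬝ᵥ (fun i : T => x i) := by
  rw [EuclideanSpace.inner_eq_star_dotProduct, dotProduct, dotProduct, sum_coe_sort T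
    (fun i => p i * x i)]
  refine (sum_subset (subset_univ T) fun i _ hi => ?_).symm.trans ?_
  · simp [not_imp_comm.1 (hx i) hi]
  · simp [mul_comm]

theorem norm_eq_one_of_shatters {B : Finset (EuclideanSpace ℝ (Fin n))}
    (hshat : Shatters (sparseHemisphereClass n s) B) {b : EuclideanSpace ℝ (Fin n)}
    (hb : b ∈ B) : ‖b‖ = 1 := by
  obtain ⟨_, ⟨x, -, -, rfl⟩, hB⟩ := hshat B subset_rfl
  exact ((Set.ext_iff.1 hB b).2 hb).2.1

theorem exists_mem_halfspaceTraces_of_shatters (hsn : s ≤ n)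
    {B : Finset (EuclideanSpace ℝ (Fin n))} (hshat : Shatters (sparseHemisphereClass n s) B)
    (t : Finset B) :
    ∃ T ∈ powersetCard s (univ : Finset (Fin n)),
      t ∈ halfspaceTraces fun (b : B) (i : T) => (b : EuclideanSpace ℝ (Fin n)) i := by
  classical
  obtain ⟨_, ⟨x, -, hxs, rfl⟩, hBt⟩ := hshat (Subtype.val '' (t : Set B))
    (by rintro _ ⟨b, -, rfl⟩; exact b.2)
  have hsupp : #{i | x i ≠ 0} ≤ s := by
    simpa [← Set.ncard_coe_finset] using hxs
  obtain ⟨T, hxT, hT⟩ := exists_superset_card_eq hsupp (by simpa using hsn)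
  refine ⟨T, mem_powersetCard_univ.2 hT, mem_halfspaceTraces.2 ⟨fun i => x i, fun b => ?_⟩⟩
  rw [← inner_eq_dotProduct_restrict fun i hi => hxT (by simpa using hi)]
  simpa [norm_eq_one_of_shatters hshat b.2] using (Set.ext_iff.1 hBt b).symm

theorem two_pow_card_le_of_shatters (hsn : s ≤ n) {B : Finset (EuclideanSpace ℝ (Fin n))}
    (hshat : Shatters (sparseHemisphereClass n s) B) :
    2 ^ #B ≤ n.choose s * ∑ k ∈ Iic s, (#B).choose k := by
  classical
  let traces (T : Finset (Fin n)) : Finset (Finset B) :=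
    halfspaceTraces fun (b : B) (i : T) => (b : EuclideanSpace ℝ (Fin n)) i
  have hcover : (univ : Finset (Finset B)) ⊆ (powersetCard s univ).biUnion traces :=
    fun t _ => mem_biUnion.2 (exists_mem_halfspaceTraces_of_shatters hsn hshat t)
  have hcard : ∀ T ∈ powersetCard s (univ : Finset (Fin n)),
      #(traces T) ≤ ∑ k ∈ Iic s, (#B).choose k := fun T hT => by
    simpa [mem_powersetCard_univ.1 hT] using card_halfspaceTraces_le
      fun (b : B) (i : T) => (b : EuclideanSpace ℝ (Fin n)) i
  calc 2 ^ #B = #(univ : Finset (Finset B)) := by simp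
    _ ≤ ∑ T ∈ powersetCard s univ, #(traces T) := (card_le_card hcover).trans card_biUnion_le
    _ ≤ #(powersetCard s (univ : Finset (Fin n))) * ∑ k ∈ Iic s, (#B).choose k :=
        sum_le_card_nsmul _ _ _ hcard
    _ = n.choose s * ∑ k ∈ Iic s, (#B).choose k := by simp

end SparseHemispheres

end

theorem stmt_17_general (n s : ℕ) (hsn : s ≤ n)
    (B : Finset (EuclideanSpace ℝ (Fin n)))
    (hshat : Shatters (sparseHemisphereClass n s) B) :
    (B.card : ℝ) ≤ (2 / Real.log 2) * s *
      Real.log (n * Real.exp 1 ^ 2 / (s * Real.log 2)) :=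
  le_of_two_pow_le_choose_mul_sum_choose hsn (two_pow_card_le_of_shatters hsn hshat)

theorem stmt_17 (n s : ℕ) (hs : 1 ≤ s) (hsn : s ≤ n)
    (B : Finset (EuclideanSpace ℝ (Fin n)))
    (hB : ∀ b ∈ B, ‖b‖ = 1)
    (hshat : Shatters (sparseHemisphereClass n s) B) :
    (B.card : ℝ) ≤ (2 / Real.log 2) * s *
      Real.log (n * Real.exp 1 ^ 2 / (s * Real.log 2)) :=
  stmt_17_general n s hsn B hshat
end

section
/- If $d$, $s$, $n$ are positive integers with $s \le d \le n$ and $2^d \le \binom{n}{s}\left(\frac{ed}{s}\right)^s$, then $d \le \frac{2}{\log 2}\, s \log\left(\frac{n e^2}{s \log 2}\right)$. -/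
/-!
Bounding `n.choose s ≤ (e n / s)^s` turns the hypothesis into `2^d ≤ (X t)^s` with
`X = n e² / (s log 2)` and `t = d log 2 / s`, that is `t ≤ log (X t)`. Since `log t ≤ t / e ≤ t / 2`,
this forces `t ≤ 2 log X`, which is the claim.
-/

open Real

theorem Nat.cast_choose_le_exp_one_mul_div_pow (n s : ℕ) :
    (n.choose s : ℝ) ≤ (exp 1 * n / s) ^ s := by
  rcases s.eq_zero_or_pos with rfl | hs
  · simp
  have hs0 : (0 : ℝ) < s := by exact_mod_cast hs
  calc (n.choose s : ℝ) ≤ n ^ s / s.factorial := Nat.choose_le_pow_div s n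
    _ = (n / s) ^ s * ((s : ℝ) ^ s / s.factorial) := by
      rw [mul_div_assoc', ← mul_pow, div_mul_cancel₀ _ hs0.ne']
    _ ≤ (n / s) ^ s * exp s := by gcongr; exact pow_div_factorial_le_exp _ hs0.le s
    _ = (exp 1 * n / s) ^ s := by rw [← exp_one_pow, ← mul_pow, mul_div_assoc, mul_comm]

theorem Real.log_le_div_exp_one {t : ℝ} (ht : 0 ≤ t) : log t ≤ t / exp 1 := by
  rcases ht.eq_or_lt with rfl | ht
  · simp
  have := log_le_sub_one_of_pos (div_pos ht (exp_pos 1))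
  rw [log_div ht.ne' (exp_pos 1).ne', log_exp] at this
  linarith

/-- This is the bound `W₋₁(x) ≥ log (x²)`: `t = log (X t)` means `-t = W₋₁(-1 / X)`. -/
theorem Real.le_two_mul_log_of_le_log_mul {X t : ℝ} (hX : 0 ≤ X) (ht : 0 < t)
    (h : t ≤ log (X * t)) : t ≤ 2 * log X := by
  rcases hX.eq_or_lt with rfl | hX
  · simp at h
    linarith
  have hlog_t : log t ≤ t / 2 :=
    (log_le_div_exp_one ht.le).trans <|
      div_le_div_of_nonneg_left ht.le two_pos (lt_trans (by norm_num) exp_one_gt_d9).le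
  rw [log_mul hX.ne' ht.ne'] at h
  linarith

theorem stmt_18_general (d s n : ℕ) (hsd : s ≤ d) (hs : 1 ≤ s)
    (h : (2 : ℝ) ^ d ≤ (n.choose s : ℝ) * (Real.exp 1 * d / s) ^ s) :
    (d : ℝ) ≤ (2 / Real.log 2) * s *
      Real.log (n * Real.exp 1 ^ 2 / (s * Real.log 2)) := by
  have hs0 : (0 : ℝ) < s := by exact_mod_cast hs
  have hd0 : (0 : ℝ) < d := by exact_mod_cast hs.trans hsd
  have hL : 0 < log 2 := log_pos one_lt_two
  set X := n * exp 1 ^ 2 / (s * log 2) with hX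
  set t := d * log 2 / s with ht
  have hXt : (exp 1 * n / s) * (exp 1 * d / s) = X * t := by
    rw [hX, ht]
    field_simp
  have hpow : (2 : ℝ) ^ d ≤ (X * t) ^ s := by
    rw [← hXt, mul_pow]
    exact h.trans (by gcongr; exact Nat.cast_choose_le_exp_one_mul_div_pow n s)
  have hlog : t ≤ log (X * t) := by
    have := log_le_log (by positivity) hpow
    rw [log_pow, log_pow] at this
    rw [ht, div_le_iff₀ hs0]
    linarith
  have ht2 := le_two_mul_log_of_le_log_mul (by positivity) (by positivity) hlog
  calc (d : ℝ) = t * s / log 2 := by rw [ht]; field_simp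
    _ ≤ 2 * log X * s / log 2 := by gcongr
    _ = 2 / log 2 * s * log X := by ring

theorem stmt_18 (d s n : ℕ) (hsd : s ≤ d) (hdn : d ≤ n) (hs : 1 ≤ s)
    (h : (2 : ℝ) ^ d ≤ (n.choose s : ℝ) * (Real.exp 1 * d / s) ^ s) :
    (d : ℝ) ≤ (2 / Real.log 2) * s *
      Real.log (n * Real.exp 1 ^ 2 / (s * Real.log 2)) :=
  stmt_18_general d s n hsd hs h
end
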